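/- Let p be a prime number. The class of abelian p-groups with pure embeddings has the amalgamation property: if M, N₁, N₂ are abelian p-groups with pure embeddings f₁ : M → N₁ and f₂ : M → N₂, then there exist an abelian p-group N and pure embeddings g₁ : N₁ → N and g₂ : N₂ → N such that g₁ ∘ f₁ = g₂ ∘ f₂. -/

import Mathlib

/-- An abelian `p`-group: every element has order `p ^ n` for some `n`. -/
def IsAbelianPGroup (p : ℕ) (G : Type) [AddCommGroup G] : Prop :=
  ∀ g : G, ∃ n : ℕ, p ^ n • g = 0

/-- A pure embedding: an injective group homomorphism whose image is a pure subgroup. -/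
def IsPureEmbedding {G U : Type} [AddCommGroup G] [AddCommGroup U] (f : G →+ U) : Prop :=
  Function.Injective f ∧ ∀ (n : ℕ) (g : G), (∃ u : U, n • u = f g) → ∃ g' : G, n • g' = g

/-!
The amalgam is the pushout `(N₁ × N₂) ⧸ {(f₁ m, -f₂ m)}`, a quotient of a product of `p`-groups.
Its first structure map inherits injectivity and purity from `f₂`: if `n • (a, b) ≡ (x, 0)`, then
`f₂ m = n • (-b)` for the `m` with `f₁ m = n • a - x`, purity of `f₂` gives `m = n • m'`, and
`x = n • (a - f₁ m')`. Swapping the factors gives the second one.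
-/

namespace IsAbelianPGroup

variable {p : ℕ} {G H : Type} [AddCommGroup G] [AddCommGroup H]

theorem prod (hG : IsAbelianPGroup p G) (hH : IsAbelianPGroup p H) :
    IsAbelianPGroup p (G × H) := by
  rintro ⟨x, y⟩
  obtain ⟨n, hn⟩ := hG x
  obtain ⟨m, hm⟩ := hH y
  refine ⟨n + m, Prod.ext ?_ ?_⟩
  · rw [Prod.smul_fst, pow_add, mul_comm, mul_smul, hn, smul_zero, Prod.fst_zero]
  · rw [Prod.smul_snd, pow_add, mul_smul, hm, smul_zero, Prod.snd_zero]

theorem of_surjective (hG : IsAbelianPGroup p G) {f : G →+ H} (hf : Function.Surjective f) :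
    IsAbelianPGroup p H := by
  intro y
  obtain ⟨x, rfl⟩ := hf y
  obtain ⟨n, hn⟩ := hG x
  exact ⟨n, by rw [← map_nsmul, hn, map_zero]⟩

end IsAbelianPGroup

theorem IsPureEmbedding.addEquiv_comp {G U V : Type} [AddCommGroup G] [AddCommGroup U]
    [AddCommGroup V] {f : G →+ U} (hf : IsPureEmbedding f) (e : U ≃+ V) :
    IsPureEmbedding (e.toAddMonoidHom.comp f) := by
  refine ⟨e.injective.comp hf.1, fun n g ⟨v, hv⟩ => hf.2 n g ⟨e.symm v, ?_⟩⟩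
  rw [← map_nsmul, hv]
  simp

namespace AddMonoidHom

variable {M N₁ N₂ : Type} [AddCommGroup M] [AddCommGroup N₁] [AddCommGroup N₂]
  (f₁ : M →+ N₁) (f₂ : M →+ N₂)

abbrev pushout : Type := (N₁ × N₂) ⧸ (f₁.prod (-f₂)).range

namespace pushout

def mk : N₁ × N₂ →+ f₁.pushout f₂ := QuotientAddGroup.mk' _

def inl : N₁ →+ f₁.pushout f₂ := (mk f₁ f₂).comp (AddMonoidHom.inl N₁ N₂)

def inr : N₂ →+ f₁.pushout f₂ := (mk f₁ f₂).comp (AddMonoidHom.inr N₁ N₂)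

theorem mk_surjective : Function.Surjective (mk f₁ f₂) := QuotientAddGroup.mk'_surjective _

variable {f₁ f₂} in
theorem mk_eq_zero_iff {z : N₁ × N₂} : mk f₁ f₂ z = 0 ↔ ∃ m, f₁ m = z.1 ∧ f₂ m = -z.2 := by
  rw [mk, QuotientAddGroup.mk'_apply, QuotientAddGroup.eq_zero_iff, mem_range]
  simp only [Prod.ext_iff, prod_apply, neg_apply, neg_eq_iff_eq_neg]

theorem inl_comp_eq_inr_comp : (inl f₁ f₂).comp f₁ = (inr f₁ f₂).comp f₂ := by
  ext m
  rw [comp_apply, comp_apply, ← sub_eq_zero, inl, inr, comp_apply, comp_apply, ← map_sub,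
    mk_eq_zero_iff]
  exact ⟨m, by simp, by simp⟩

theorem isPureEmbedding_inl (hf₂ : IsPureEmbedding f₂) : IsPureEmbedding (inl f₁ f₂) := by
  constructor
  · rw [injective_iff_map_eq_zero]
    intro x hx
    obtain ⟨m, hm₁, hm₂⟩ := mk_eq_zero_iff.mp (show mk f₁ f₂ (x, 0) = 0 from hx)
    have hm : m = 0 := hf₂.1 (by simpa using hm₂)
    rw [← show f₁ m = x from hm₁, hm, map_zero]
  · rintro n x ⟨u, hu⟩
    obtain ⟨⟨a, b⟩, rfl⟩ := mk_surjective f₁ f₂ u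
    rw [inl, comp_apply, ← map_nsmul, ← sub_eq_zero, ← map_sub, mk_eq_zero_iff] at hu
    obtain ⟨m, hm₁, hm₂⟩ := hu
    obtain ⟨m', rfl⟩ := hf₂.2 n m ⟨-b, by simpa using hm₂.symm⟩
    refine ⟨a - f₁ m', ?_⟩
    rw [smul_sub, ← map_nsmul, hm₁]
    simp

def swap : f₂.pushout f₁ ≃+ f₁.pushout f₂ :=
  QuotientAddGroup.congr _ _ (AddEquiv.prodComm) <| by
    ext ⟨x, y⟩
    simp only [AddSubgroup.mem_map, mem_range]
    constructor
    · rintro ⟨_, ⟨m, rfl⟩, h⟩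
      exact ⟨-m, by simpa using h⟩
    · rintro ⟨m, h⟩
      exact ⟨_, ⟨-m, rfl⟩, by simpa using h⟩

theorem swap_comp_inl : (swap f₁ f₂).toAddMonoidHom.comp (inl f₂ f₁) = inr f₁ f₂ := by
  ext y
  rfl

theorem isPureEmbedding_inr (hf₁ : IsPureEmbedding f₁) : IsPureEmbedding (inr f₁ f₂) :=
  swap_comp_inl f₁ f₂ ▸ (isPureEmbedding_inl f₂ f₁ hf₁).addEquiv_comp _

end pushout

end AddMonoidHom

theorem p_groups_amalgamation_general (p : ℕ)
    (M N₁ N₂ : Type) [AddCommGroup M] [AddCommGroup N₁] [AddCommGroup N₂]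
    (hN₁ : IsAbelianPGroup p N₁) (hN₂ : IsAbelianPGroup p N₂)
    (f₁ : M →+ N₁) (f₂ : M →+ N₂) (hf₁ : IsPureEmbedding f₁) (hf₂ : IsPureEmbedding f₂) :
    ∃ (N : Type) (_ : AddCommGroup N), IsAbelianPGroup p N ∧
      ∃ (g₁ : N₁ →+ N) (g₂ : N₂ →+ N), IsPureEmbedding g₁ ∧ IsPureEmbedding g₂ ∧
        g₁.comp f₁ = g₂.comp f₂ :=
  open AddMonoidHom in
  ⟨f₁.pushout f₂, inferInstance, (hN₁.prod hN₂).of_surjective (pushout.mk_surjective f₁ f₂),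
    pushout.inl f₁ f₂, pushout.inr f₁ f₂, pushout.isPureEmbedding_inl f₁ f₂ hf₂,
    pushout.isPureEmbedding_inr f₁ f₂ hf₁, pushout.inl_comp_eq_inr_comp f₁ f₂⟩

theorem p_groups_amalgamation (p : ℕ) (hp : p.Prime)
    (M N₁ N₂ : Type) [AddCommGroup M] [AddCommGroup N₁] [AddCommGroup N₂]
    (hM : IsAbelianPGroup p M) (hN₁ : IsAbelianPGroup p N₁) (hN₂ : IsAbelianPGroup p N₂)
    (f₁ : M →+ N₁) (f₂ : M →+ N₂) (hf₁ : IsPureEmbedding f₁) (hf₂ : IsPureEmbedding f₂) :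
    ∃ (N : Type) (_ : AddCommGroup N), IsAbelianPGroup p N ∧
      ∃ (g₁ : N₁ →+ N) (g₂ : N₂ →+ N), IsPureEmbedding g₁ ∧ IsPureEmbedding g₂ ∧
        g₁.comp f₁ = g₂.comp f₂ :=
  p_groups_amalgamation_general p M N₁ N₂ hN₁ hN₂ f₁ f₂ hf₁ hf₂
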